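/- arXiv:1409.4227 — 3 statements merged into one kernel-verified Lean document; each statement's English description precedes it below -/
import Mathlib

section
/- The identity permutation is the unique minimal element of the weak order on involutions of S_n: for every involution π, there is a sequence id = π_0, π_1, ..., π_m = π of involutions such that each π_{j+1} = m(s_{i_j})·π_j ≠ π_j for some simple transposition s_{i_j}. -/
/-- The number of inversions (Coxeter length) of a permutation of `Fin n`. -/
def invNum {n : ℕ} (w : Equiv.Perm (Fin n)) : ℕ :=
  (Finset.univ.filter fun p : Fin n × Fin n => p.1 < p.2 ∧ w p.2 < w p.1).card

/-- The number of 2-cycles of an involution. -/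
def numTwoCycles {n : ℕ} (π : Equiv.Perm (Fin n)) : ℕ :=
  (Finset.univ.filter fun i : Fin n => π i ≠ i).card / 2

/-- The simple transposition `s_i = (i, i+1)` (0-indexed) in `S_n`, or `1` if out of range. -/
def sNat (n i : ℕ) : Equiv.Perm (Fin n) :=
  if h : i + 1 < n then Equiv.swap ⟨i, Nat.lt_of_succ_lt h⟩ ⟨i + 1, h⟩ else 1

/-- The Richardson–Springer monoid action of `m(s_i)` on involutions:
`s_i π s_i` if `ℓ(s_i π s_i) = ℓ(π) + 2`; `s_i π` if `π` fixes both `i` and `i+1`;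
and `π` otherwise. -/
def RS (n i : ℕ) (π : Equiv.Perm (Fin n)) : Equiv.Perm (Fin n) :=
  if invNum (sNat n i * π * sNat n i) = invNum π + 2 then sNat n i * π * sNat n i
  else if ∀ x : Fin n, ((x : ℕ) = i ∨ (x : ℕ) = i + 1) → π x = x then sNat n i * π
  else π

/-- The covering relation of the weak order on involutions: `π ⋖ π'` iff
`π' = m(s_i)·π ≠ π` for some `i`. -/
def cov (n : ℕ) (π π' : Equiv.Perm (Fin n)) : Prop :=
  ∃ i : ℕ, RS n i π = π' ∧ π' ≠ π

/-!
Induction on the length `invNum`. An involution `π ≠ 1` has an adjacent descent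
`π (a + 1) < π a`; let `s = (a a+1)`. If `π` swaps `a` and `a + 1`, then `s π` is an involution
fixing `a` and `a + 1`, one shorter than `π`, and `m(s)` multiplies it back to `π`. Otherwise
`s π s` is an involution two shorter than `π` (since `s` preserves the relative order of
`π (a + 1) < π a`), and `m(s)` conjugates it back to `π`.
-/

open Equiv Finset

section WeakOrder

variable {n : ℕ}

lemma sNat_eq_swap {a b : Fin n} (hab : (b : ℕ) = a + 1) : sNat n a = swap a b := by
  obtain ⟨b, hb⟩ := b
  obtain rfl : b = a + 1 := hab
  simp [sNat, hb]

lemma swap_apply_lt_swap_apply_iff {a b x y : Fin n} (hab : (b : ℕ) = a + 1)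
    (hx : ¬(x = a ∧ y = b)) (hy : ¬(x = b ∧ y = a)) : swap a b x < swap a b y ↔ x < y := by
  simp only [swap_apply_def]
  split_ifs <;> simp only [Fin.lt_def, Fin.ext_iff, not_and] at * <;> omega

lemma invNum_inv (π : Perm (Fin n)) : invNum π⁻¹ = invNum π := by
  unfold invNum
  refine card_nbij' (fun p => (π⁻¹ p.2, π⁻¹ p.1)) (fun p => (π p.2, π p.1)) ?_ ?_ ?_ ?_ <;>
    rintro ⟨x, y⟩ h <;> simp_all

lemma invNum_mul (w σ : Perm (Fin n)) :
    invNum (w * σ) = #{q : Fin n × Fin n | σ⁻¹ q.1 < σ⁻¹ q.2 ∧ w q.2 < w q.1} := by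
  refine card_nbij' (fun p => (σ p.1, σ p.2)) (fun q => (σ⁻¹ q.1, σ⁻¹ q.2)) ?_ ?_ ?_ ?_ <;>
    simp only [Set.MapsTo, Set.LeftInvOn, Set.RightInvOn, mem_coe, mem_filter] <;> simp

lemma invNum_mul_swap_of_adjacent {a b : Fin n} (hab : (b : ℕ) = a + 1) {π : Perm (Fin n)}
    (hd : π b < π a) : invNum (π * swap a b) + 1 = invNum π := by
  have herase : ({q : Fin n × Fin n | swap a b q.1 < swap a b q.2 ∧ π q.2 < π q.1} : Finset _) =
      ({q : Fin n × Fin n | q.1 < q.2 ∧ π q.2 < π q.1} : Finset _).erase (a, b) := by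
    ext ⟨x, y⟩
    simp only [mem_filter, mem_erase, mem_univ, true_and, ne_eq, Prod.mk.injEq]
    by_cases hxy : x = a ∧ y = b
    · obtain ⟨rfl, rfl⟩ := hxy
      have : ¬ y < x := by rw [Fin.lt_def]; omega
      simp [this]
    by_cases hyx : x = b ∧ y = a
    · obtain ⟨rfl, rfl⟩ := hyx
      simp [hd.not_gt]
    rw [swap_apply_lt_swap_apply_iff hab hxy hyx]
    tauto
  have hmem : (a, b) ∈ ({q : Fin n × Fin n | q.1 < q.2 ∧ π q.2 < π q.1} : Finset _) :=
    mem_filter.2 ⟨mem_univ _, show a < b from Fin.lt_def.2 (by omega), hd⟩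
  rw [invNum_mul, swap_inv, herase, card_erase_add_one hmem]
  rfl

lemma exists_adjacent_descent {π : Perm (Fin n)} (h : π ≠ 1) :
    ∃ a b : Fin n, (b : ℕ) = a + 1 ∧ π b < π a := by
  contrapose! h
  obtain _ | m := n
  · exact Subsingleton.elim _ _
  have hmono : StrictMono π := Fin.strictMono_iff_lt_succ.2 fun i =>
    (h _ _ rfl).lt_of_ne (π.injective.ne (Fin.castSucc_lt_succ (i := i)).ne)
  exact Perm.ext fun x => hmono.apply_eq

lemma cov_swap_mul {a b : Fin n} (hab : (b : ℕ) = a + 1) {ρ : Perm (Fin n)} (ha : ρ a = a)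
    (hb : ρ b = b) : cov n ρ (swap a b * ρ) := by
  have hconj : swap a b * ρ * swap a b = ρ := by
    rw [mul_assoc, mul_swap_eq_swap_mul, ha, hb, swap_mul_self_mul]
  refine ⟨a, ?_, ?_⟩
  · rw [RS, sNat_eq_swap hab, hconj, if_neg (by omega), if_pos]
    rintro x (hx | hx)
    · rw [show x = a from Fin.ext hx, ha]
    · rw [show x = b from Fin.ext (hx.trans hab.symm), hb]
  · rw [Ne, mul_eq_right, swap_eq_one_iff, Fin.ext_iff]
    omega

lemma cov_swap_mul_mul_swap {a b : Fin n} (hab : (b : ℕ) = a + 1) {ρ : Perm (Fin n)}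
    (h : invNum (swap a b * ρ * swap a b) = invNum ρ + 2) :
    cov n ρ (swap a b * ρ * swap a b) := by
  refine ⟨a, by rw [RS, sNat_eq_swap hab, if_pos h], fun heq => ?_⟩
  rw [heq] at h
  omega

theorem exists_cov_of_involution {π : Perm (Fin n)} (hπ : π * π = 1) (h1 : π ≠ 1) :
    ∃ ρ : Perm (Fin n), ρ * ρ = 1 ∧ invNum ρ < invNum π ∧ cov n ρ π := by
  obtain ⟨a, b, hab, hd⟩ := exists_adjacent_descent h1
  have hπs : invNum (π * swap a b) + 1 = invNum π := invNum_mul_swap_of_adjacent hab hd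
  by_cases hπa : π a = b
  · have hπb : π b = a := by rw [← hπa, ← Perm.mul_apply, hπ, Perm.one_apply]
    have hcomm : π * swap a b = swap a b * π := by
      rw [mul_swap_eq_swap_mul, hπa, hπb, swap_comm]
    refine ⟨swap a b * π, ?_, by rw [← hcomm]; omega, ?_⟩
    · rw [mul_assoc, ← mul_assoc π, hcomm, mul_assoc, hπ, mul_one, swap_mul_self]
    · simpa only [swap_mul_self_mul] using
        cov_swap_mul hab (ρ := swap a b * π) (by simp [hπa]) (by simp [hπb])
  · have hπ_inv : π⁻¹ = π := inv_eq_of_mul_eq_one_right hπ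
    have hdesc : swap a b (π b) < swap a b (π a) := by
      refine (swap_apply_lt_swap_apply_iff hab (fun h => hπa h.2) fun h => ?_).2 hd
      rw [h.1, h.2, Fin.lt_def] at hd
      omega
    have hsπs : invNum (swap a b * π * swap a b) + 1 = invNum (swap a b * π) :=
      invNum_mul_swap_of_adjacent hab hdesc
    have hsπ : invNum (swap a b * π) = invNum (π * swap a b) := by
      rw [← invNum_inv, mul_inv_rev, swap_inv, hπ_inv]
    have hconj : swap a b * (swap a b * π * swap a b) * swap a b = π := by
      simp only [mul_assoc, swap_mul_self_mul, swap_mul_self, mul_one]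
    refine ⟨swap a b * π * swap a b, ?_, by omega, ?_⟩
    · simp only [mul_assoc, swap_mul_self_mul]
      rw [← mul_assoc π, hπ, one_mul, swap_mul_self]
    · simpa only [hconj] using
        cov_swap_mul_mul_swap hab (ρ := swap a b * π * swap a b) (by rw [hconj]; omega)

end WeakOrder

/-- The identity is the unique minimal element of weak order on involutions: every
involution `π` is reachable from `id` by a chain of covering relations
`π_{j+1} = m(s_{i_j})·π_j ≠ π_j`. -/
theorem stmt7 (n : ℕ) (π : Equiv.Perm (Fin n)) (hπ : π * π = 1) :
    Relation.ReflTransGen (cov n) 1 π := by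
  induction π using (measure invNum).wf.induction with
  | h π ih =>
    by_cases h1 : π = 1
    · exact h1 ▸ .refl
    obtain ⟨ρ, hρ, hlt, hcov⟩ := exists_cov_of_involution hπ h1
    exact (ih ρ hlt hρ).tail hcov
end

section
/- The W-set of the involution α' = (1,2)(3,4)···(2k−1,2k) viewed inside the poset of all involutions of S_{2k} is the singleton {w*}, where w* = [2,1,4,3,...,2k,2k−1]: that is, w* is the unique permutation with m(w*)·id = α' and ℓ(w*) = L(α') = k. -/
/-- The fixed-point free involution `α' = (1,2)(3,4)⋯(2k−1,2k)` of `S_{2k}`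
(0-indexed: it swaps `2m` and `2m+1` for each `m`). -/
def alpha (k : ℕ) : Equiv.Perm (Fin (2 * k)) :=
  Function.Involutive.toPerm
    (fun x => ⟨2 * ((x : ℕ) / 2) + (1 - (x : ℕ) % 2), by have := x.2; omega⟩)
    (by intro x; apply Fin.ext; simp only [Fin.val_mk]; omega)

/-- `m(w)·π` computed along a word of simple-transposition indices, applied right to left. -/
def mWord (n : ℕ) (l : List ℕ) (π : Equiv.Perm (Fin n)) : Equiv.Perm (Fin n) :=
  l.foldr (RS n) π

/-!
Every step `π ↦ m(s_i)·π` enlarges the support of `π` by at most two points, and by exactly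
two only when it is left multiplication by `s_i`: conjugation preserves the support size.
Since `α'` moves all `2k` points, a word of length `k` with `m(w)·1 = α'` must act by left
multiplication at every step, so `m(w)·1 = w` and `w = α'`. Conversely the word
`s_0 s_2 ⋯ s_{2k-2}` produces `α'`, one disjoint transposition at a time.
-/

open Equiv Finset

section RichardsonSpringer

lemma sNat_inv (n i : ℕ) : (sNat n i)⁻¹ = sNat n i := by
  unfold sNat; split_ifs <;> simp

lemma card_support_sNat_le (n i : ℕ) : #(sNat n i).support ≤ 2 := by
  unfold sNat
  split_ifs
  · exact (Perm.card_support_swap (by simp [Fin.ext_iff])).le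
  · simp

variable {n : ℕ}

lemma sNat_val {i : ℕ} (h : i + 1 < n) (x : Fin n) :
    (sNat n i x : ℕ) = if (x : ℕ) = i then i + 1 else if (x : ℕ) = i + 1 then i else x := by
  simp only [sNat, dif_pos h, swap_apply_def]
  split_ifs <;> simp_all [Fin.ext_iff]

lemma RS_eq_sNat_mul_of_fixed {i : ℕ} (π : Perm (Fin n))
    (hfix : ∀ x : Fin n, ((x : ℕ) = i ∨ (x : ℕ) = i + 1) → π x = x) :
    RS n i π = sNat n i * π := by
  have hconj : sNat n i * π * sNat n i = π := by
    unfold sNat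
    split_ifs
    · rw [mul_assoc, mul_swap_eq_swap_mul, hfix _ (.inl rfl), hfix _ (.inr rfl),
        ← mul_assoc, swap_mul_self, one_mul]
    · simp
  rw [RS, hconj, if_neg (by omega), if_pos hfix]

lemma card_support_sNat_mul_le (i : ℕ) (π : Perm (Fin n)) :
    #(sNat n i * π).support ≤ #π.support + 2 :=
  calc #(sNat n i * π).support ≤ #((sNat n i).support ∪ π.support) :=
        card_le_card (Perm.support_mul_le _ _)
    _ ≤ #(sNat n i).support + #π.support := card_union_le _ _
    _ ≤ #π.support + 2 := by linarith [card_support_sNat_le n i]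

lemma card_support_sNat_conj (i : ℕ) (π : Perm (Fin n)) :
    #(sNat n i * π * sNat n i).support = #π.support := by
  nth_rewrite 2 [← sNat_inv]
  exact Perm.card_support_conj

lemma RS_eq_sNat_mul_or_card_support_eq (i : ℕ) (π : Perm (Fin n)) :
    RS n i π = sNat n i * π ∨ #(RS n i π).support = #π.support := by
  unfold RS
  split_ifs
  · exact .inr (card_support_sNat_conj i π)
  · exact .inl rfl
  · exact .inr rfl

lemma card_support_RS_le (i : ℕ) (π : Perm (Fin n)) :
    #(RS n i π).support ≤ #π.support + 2 := by
  rcases RS_eq_sNat_mul_or_card_support_eq i π with h | h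
  · exact h ▸ card_support_sNat_mul_le i π
  · omega

lemma mWord_cons (i : ℕ) (l : List ℕ) (π : Perm (Fin n)) :
    mWord n (i :: l) π = RS n i (mWord n l π) := rfl

lemma card_support_mWord_le (l : List ℕ) (π : Perm (Fin n)) :
    #(mWord n l π).support ≤ #π.support + 2 * l.length := by
  induction l with
  | nil => simp [mWord]
  | cons i t ih =>
    have := card_support_RS_le i (mWord n t π)
    rw [mWord_cons, List.length_cons]
    omega

lemma mWord_eq_prod_mul_of_card_support_eq (l : List ℕ) (π : Perm (Fin n))
    (h : #(mWord n l π).support = #π.support + 2 * l.length) :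
    mWord n l π = (l.map (sNat n)).prod * π := by
  induction l with
  | nil => rfl
  | cons i t ih =>
    rw [mWord_cons, List.length_cons] at h
    rw [mWord_cons]
    have hle := card_support_mWord_le t π
    rcases RS_eq_sNat_mul_or_card_support_eq i (mWord n t π) with hRS | hRS
    · have hgrow := card_support_sNat_mul_le i (mWord n t π)
      rw [hRS, ih (by rw [hRS] at h; omega), List.map_cons, List.prod_cons, mul_assoc]
    · omega

end RichardsonSpringer

section Alpha

lemma alpha_val (k : ℕ) (x : Fin (2 * k)) :
    (alpha k x : ℕ) = 2 * ((x : ℕ) / 2) + (1 - (x : ℕ) % 2) := rfl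

lemma support_alpha (k : ℕ) : (alpha k).support = univ := by
  ext x
  simp only [Perm.mem_support, mem_univ, iff_true, ne_eq, Fin.ext_iff, alpha_val]
  omega

lemma card_support_alpha (k : ℕ) : #(alpha k).support = 2 * k := by
  rw [support_alpha, card_univ, Fintype.card_fin]

lemma numTwoCycles_alpha (k : ℕ) : numTwoCycles (alpha k) = k := by
  have : (univ.filter fun i => alpha k i ≠ i) = (alpha k).support := by
    ext x; simp [Perm.mem_support]
  rw [numTwoCycles, this, card_support_alpha]
  omega

/-- The inversions of `α'` are exactly the pairs `(2m, 2m+1)`. -/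
def inversionPairOfAlpha (k : ℕ) : Fin k ↪ Fin (2 * k) × Fin (2 * k) where
  toFun m := (⟨2 * m, by omega⟩, ⟨2 * m + 1, by omega⟩)
  inj' := by
    intro a b hab
    simp only [Prod.mk.injEq, Fin.mk.injEq] at hab
    exact Fin.ext (by omega)

lemma invNum_alpha (k : ℕ) : invNum (alpha k) = k := by
  have : (univ.filter fun p : Fin (2 * k) × Fin (2 * k) =>
      p.1 < p.2 ∧ alpha k p.2 < alpha k p.1) = univ.map (inversionPairOfAlpha k) := by
    ext ⟨a, b⟩
    simp only [mem_filter, mem_univ, true_and, mem_map, inversionPairOfAlpha,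
      Prod.ext_iff, Fin.lt_def, Fin.ext_iff, alpha_val]
    constructor
    · rintro ⟨hab, hba⟩
      exact ⟨⟨a / 2, by omega⟩, (by omega : 2 * ((a : ℕ) / 2) = a),
        (by omega : 2 * ((a : ℕ) / 2) + 1 = b)⟩
    · rintro ⟨m, ha, hb⟩
      change 2 * (m : ℕ) = a at ha
      change 2 * (m : ℕ) + 1 = b at hb
      omega
  rw [invNum, this, card_map, card_univ, Fintype.card_fin]

lemma half_invNum_add_numTwoCycles_alpha (k : ℕ) :
    (invNum (alpha k) + numTwoCycles (alpha k)) / 2 = k := by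
  rw [invNum_alpha, numTwoCycles_alpha]
  omega

def alphaFrom (k j : ℕ) : Perm (Fin (2 * k)) :=
  Function.Involutive.toPerm
    (fun x => if (x : ℕ) < 2 * j then x
      else ⟨2 * ((x : ℕ) / 2) + (1 - (x : ℕ) % 2), by omega⟩)
    (by intro x; ext; simp only; split_ifs <;> simp_all <;> omega)

lemma alphaFrom_val (k j : ℕ) (x : Fin (2 * k)) :
    (alphaFrom k j x : ℕ) =
      if (x : ℕ) < 2 * j then (x : ℕ) else 2 * ((x : ℕ) / 2) + (1 - (x : ℕ) % 2) := by
  simp only [alphaFrom, Function.Involutive.toPerm, coe_fn_mk]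
  split_ifs <;> rfl

lemma alphaFrom_zero (k : ℕ) : alphaFrom k 0 = alpha k := by
  ext x
  simp [alphaFrom_val, alpha_val]

lemma alphaFrom_self (k : ℕ) : alphaFrom k k = 1 := by
  ext x
  simp [alphaFrom_val]

lemma sNat_mul_alphaFrom_succ {k j : ℕ} (hj : j < k) :
    sNat (2 * k) (2 * j) * alphaFrom k (j + 1) = alphaFrom k j := by
  ext x
  rw [Perm.mul_apply, sNat_val (by omega), alphaFrom_val, alphaFrom_val]
  split_ifs <;> omega

end Alpha

lemma mWord_alphaFrom {k : ℕ} : ∀ j ≤ k,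
    mWord (2 * k) ((List.range j).map (2 * ·)) (alphaFrom k j) = alpha k
  | 0, _ => alphaFrom_zero k
  | j + 1, hj => by
    have hfix : ∀ x : Fin (2 * k), ((x : ℕ) = 2 * j ∨ (x : ℕ) = 2 * j + 1) →
        alphaFrom k (j + 1) x = x := by
      intro x hx
      ext
      rw [alphaFrom_val, if_pos (by omega)]
    rw [List.range_succ, List.map_append, mWord, List.foldr_append]
    change mWord (2 * k) _ (RS (2 * k) (2 * j) (alphaFrom k (j + 1))) = _
    rw [RS_eq_sNat_mul_of_fixed _ hfix, sNat_mul_alphaFrom_succ (by omega)]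
    exact mWord_alphaFrom j (by omega)

lemma prod_eq_alpha_of_mWord_one_eq_alpha {k : ℕ} {l : List ℕ} (hlen : l.length = k)
    (hm : mWord (2 * k) l 1 = alpha k) : (l.map (sNat (2 * k))).prod = alpha k := by
  have hcard :
      #(mWord (2 * k) l 1).support = #(1 : Perm (Fin (2 * k))).support + 2 * l.length := by
    rw [hm, card_support_alpha, Perm.support_one, card_empty, hlen, zero_add]
  rw [← hm, mWord_eq_prod_mul_of_card_support_eq l 1 hcard, mul_one]

/-- The W-set of `α' = (1,2)(3,4)⋯(2k−1,2k)` inside the poset of all involutions of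
`S_{2k}` is the singleton `{w*}`, where `w* = [2,1,4,3,…,2k,2k−1]` (the permutation
`alpha k` itself): `w` satisfies `m(w)·id = α'` (via a reduced word) with
`ℓ(w) = L(α') = k` if and only if `w = alpha k`. -/
theorem stmt15 (k : ℕ) (w : Equiv.Perm (Fin (2 * k))) :
    ((∃ l : List ℕ, (l.map (sNat (2 * k))).prod = w ∧ l.length = invNum w ∧
        mWord (2 * k) l 1 = alpha k) ∧
      invNum w = (invNum (alpha k) + numTwoCycles (alpha k)) / 2 ∧
      (invNum (alpha k) + numTwoCycles (alpha k)) / 2 = k) ↔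
    w = alpha k := by
  have hL := half_invNum_add_numTwoCycles_alpha k
  constructor
  · rintro ⟨⟨l, hprod, hlen, hm⟩, hw, -⟩
    rw [← hprod, prod_eq_alpha_of_mWord_one_eq_alpha (by rw [hlen, hw, hL]) hm]
  · rintro rfl
    have hm : mWord (2 * k) ((List.range k).map (2 * ·)) 1 = alpha k := by
      simpa [alphaFrom_self] using mWord_alphaFrom k le_rfl
    refine ⟨⟨_, prod_eq_alpha_of_mWord_one_eq_alpha (by simp) hm, by simp [invNum_alpha], hm⟩,
      ?_, hL⟩
    rw [hL, invNum_alpha]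
end

section
/- Each covering relation of the weak order on (p,q)-clans increases the rank function L^±(π) = pq − L(π) by exactly 1, where L(π) = (ℓ(π) + k)/2 is computed from the underlying involution π with k 2-cycles. Concretely: if π' ⋖_i π is a cover (of any of the types IA, IB, IC, II), then L(π) = L(π') − 1, so L^±(π) = L^±(π') + 1. -/
/-- A `(p,q)`-clan: an involution of `S_{p+q}` together with a sign (`true` = `+`,
`false` = `−`) attached to each fixed point, such that `#(+) − #(−) = p − q`.
(Non-fixed points are assigned the junk value `false`.) -/
structure Clan (p q : ℕ) where
  π : Equiv.Perm (Fin (p + q))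
  invol : π * π = 1
  sign : Fin (p + q) → Bool
  signFix : ∀ i, π i ≠ i → sign i = false
  charge : (Finset.univ.filter fun i => π i = i ∧ sign i = true).card + q =
    (Finset.univ.filter fun i => π i = i ∧ sign i = false).card + p

/-- The covering relation `c' ⋖ c` of the weak order on `(p,q)`-clans, at consecutive
positions `a`, `b = a+1`.  Type I (IA/IB/IC): `c.π = s c'.π s` with
`ℓ(c.π) = ℓ(c'.π) − 2`, the signs carried along by `s = (a,b)`.  Type II: `c'` has the
2-cycle `(a,b)`, which is replaced in `c` by two oppositely-signed fixed points, all other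
signs unchanged. -/
def ClanCov {p q : ℕ} (a b : Fin (p + q)) (c' c : Clan p q) : Prop :=
  (b : ℕ) = (a : ℕ) + 1 ∧
  ((c.π = Equiv.swap a b * c'.π * Equiv.swap a b ∧ invNum c.π + 2 = invNum c'.π ∧
      ∀ x, c'.π x = x → c.sign (Equiv.swap a b x) = c'.sign x) ∨
    (c'.π a = b ∧ c.π = Equiv.swap a b * c'.π ∧ c.sign a = !c.sign b ∧
      ∀ x, x ≠ a → x ≠ b → c.sign x = c'.sign x))

/-!
A type I cover conjugates the involution by `s = (a, a+1)`, which keeps the number `k` of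
2-cycles, and lowers `ℓ` by 2 by hypothesis. A type II cover multiplies by `s` on the left: this
removes the 2-cycle `(a, a+1)` and exactly one inversion, the pair `(a, a+1)` itself. Either way
`ℓ + k` drops by 2.

The second conjunct is about truncated subtraction, so it needs `L(π') ≤ pq`. No inversion joins
two fixed points, and the charge condition leaves `p - k` fixed points of sign `+` and `q - k`
of sign `−`, hence `ℓ + k ≤ C(p+q, 2) - C(p+q-2k, 2) + k = 2pq - 2(p-k)(q-k)`.
-/

open Finset Equiv Equiv.Perm

lemma swap_lt_swap_of_covBy {α : Type*} [LinearOrder α] {a b x y : α}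
    (hab : a ⋖ b) (hxy : x < y) (hne : ¬(x = a ∧ y = b)) : swap a b x < swap a b y := by
  rcases eq_or_ne x a with rfl | hxa
  · have hyb : y ≠ b := fun h => hne ⟨rfl, h⟩
    rw [swap_apply_left, swap_apply_of_ne_of_ne hxy.ne' hyb]
    exact (hab.ge_of_gt hxy).lt_of_ne' hyb
  rcases eq_or_ne x b with rfl | hxb
  · rw [swap_apply_right, swap_apply_of_ne_of_ne (hab.lt.trans hxy).ne' hxy.ne']
    exact hab.lt.trans hxy
  rw [swap_apply_of_ne_of_ne hxa hxb]
  rcases eq_or_ne y a with rfl | hya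
  · rw [swap_apply_left]
    exact hxy.trans hab.lt
  rcases eq_or_ne y b with rfl | hyb
  · rw [swap_apply_right]
    exact (hab.le_of_lt hxy).lt_of_ne hxa
  rwa [swap_apply_of_ne_of_ne hya hyb]

lemma numTwoCycles_eq_card_support_div_two {n : ℕ} (π : Perm (Fin n)) :
    numTwoCycles π = #π.support / 2 := rfl

lemma numTwoCycles_conj {n : ℕ} (σ π : Perm (Fin n)) :
    numTwoCycles (σ * π * σ⁻¹) = numTwoCycles π := by
  simp only [numTwoCycles_eq_card_support_div_two, card_support_conj]

lemma two_mul_numTwoCycles {n : ℕ} {π : Perm (Fin n)} (hπ : π * π = 1) :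
    2 * numTwoCycles π = #π.support :=
  Nat.mul_div_cancel' (two_dvd_card_support (by rwa [sq]))

lemma numTwoCycles_swap_mul_add_one {n : ℕ} {π : Perm (Fin n)} {a b : Fin n} (hab : a ≠ b)
    (ha : π a = b) (hb : π b = a) :
    numTwoCycles (swap a b * π) + 1 = numTwoCycles π := by
  have hdisj : Disjoint (swap a b) (swap a b * π) := by
    intro x
    by_cases hx : x = a ∨ x = b
    · right
      rcases hx with rfl | rfl <;> simp [ha, hb]
    · obtain ⟨hxa, hxb⟩ := not_or.mp hx
      exact .inl (swap_apply_of_ne_of_ne hxa hxb)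
  have hcard := hdisj.card_support_mul
  rw [← mul_assoc, swap_mul_self, one_mul, card_support_swap hab] at hcard
  simp only [numTwoCycles_eq_card_support_div_two, hcard]
  omega

lemma invNum_swap_mul_add_one {n : ℕ} {a b i j : Fin n} {w : Perm (Fin n)} (hab : a ⋖ b)
    (hij : i < j) (hi : w i = b) (hj : w j = a) :
    invNum (swap a b * w) + 1 = invNum w := by
  have hmem : (i, j) ∈ univ.filter fun p : Fin n × Fin n => p.1 < p.2 ∧ w p.2 < w p.1 := by
    simp [hij, hi, hj, hab.lt]
  suffices h : (univ.filter fun p : Fin n × Fin n =>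
      p.1 < p.2 ∧ (swap a b * w) p.2 < (swap a b * w) p.1) =
      (univ.filter fun p : Fin n × Fin n => p.1 < p.2 ∧ w p.2 < w p.1).erase (i, j) by
    rw [invNum, invNum, h, card_erase_add_one hmem]
  ext ⟨x, y⟩ : 1
  simp only [mem_filter, mem_univ, true_and, mem_erase, ne_eq, Prod.mk.injEq]
  simp only [Perm.mul_apply]
  constructor
  · rintro ⟨hxy, hlt⟩
    refine ⟨?_, hxy, ?_⟩
    · rintro ⟨rfl, rfl⟩
      rw [hi, hj, swap_apply_left, swap_apply_right] at hlt
      exact hlt.not_gt hab.lt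
    · have hne : ¬(swap a b (w y) = a ∧ swap a b (w x) = b) := by
        rintro ⟨hya, hxb⟩
        rw [swap_apply_eq_iff, swap_apply_left, ← hi] at hya
        rw [swap_apply_eq_iff, swap_apply_right, ← hj] at hxb
        exact hij.not_gt (w.injective hya ▸ w.injective hxb ▸ hxy)
      simpa using swap_lt_swap_of_covBy hab hlt hne
  · rintro ⟨hne, hxy, hlt⟩
    refine ⟨hxy, swap_lt_swap_of_covBy hab hlt ?_⟩
    rintro ⟨hya, hxb⟩
    exact hne ⟨w.injective (hxb.trans hi.symm), w.injective (hya.trans hj.symm)⟩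

lemma invNum_add_choose_card_fixed_le {n : ℕ} (w : Perm (Fin n)) :
    invNum w + (#{i | w i = i}).choose 2 ≤ n.choose 2 := by
  set F : Finset (Fin n) := {i | w i = i}
  have hdisj : Disjoint (univ.filter fun p : Fin n × Fin n => p.1 < p.2 ∧ w p.2 < w p.1)
      {p ∈ F ×ˢ F | p.1 < p.2} := by
    rw [disjoint_left]
    rintro ⟨x, y⟩ hinv hfix
    simp only [F, mem_filter, mem_product, mem_univ, true_and] at hinv hfix
    obtain ⟨⟨hx, hy⟩, hxy⟩ := hfix
    rw [hx, hy] at hinv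
    exact lt_asymm hxy hinv.2
  calc invNum w + (#F).choose 2
      = #((univ.filter fun p : Fin n × Fin n => p.1 < p.2 ∧ w p.2 < w p.1) ∪
          {p ∈ F ×ˢ F | p.1 < p.2}) := by
        rw [card_union_of_disjoint hdisj, card_product_filter_lt, invNum]
    _ ≤ #{p : Fin n × Fin n | p.1 < p.2} := by
        refine card_le_card (union_subset ?_ ?_) <;> intro p hp <;> simp_all
    _ = n.choose 2 := by rw [Fintype.card_product_filter_lt, Fintype.card_fin]

namespace Clan

variable {p q : ℕ} (c : Clan p q)

lemma card_fixed_add_two_mul_numTwoCycles :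
    #{i | c.π i = i} + 2 * numTwoCycles c.π = p + q := by
  rw [two_mul_numTwoCycles c.invol, support, card_filter_add_card_filter_not,
    card_univ, Fintype.card_fin]

lemma card_fixed_eq_card_pos_add_card_neg :
    #{i | c.π i = i} =
      #{i | c.π i = i ∧ c.sign i = true} + #{i | c.π i = i ∧ c.sign i = false} := by
  rw [← card_filter_add_card_filter_not (fun i => c.sign i = true), filter_filter,
    filter_filter]
  simp only [Bool.not_eq_true]

theorem invNum_add_numTwoCycles_le : invNum c.π + numTwoCycles c.π ≤ 2 * (p * q) := by
  have hinv := invNum_add_choose_card_fixed_le c.π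
  have hfix := c.card_fixed_add_two_mul_numTwoCycles
  have hsign := c.card_fixed_eq_card_pos_add_card_neg
  have hcharge := c.charge
  generalize invNum c.π = I at *
  generalize numTwoCycles c.π = k at *
  generalize #{i | c.π i = i ∧ c.sign i = true} = P at *
  generalize #{i | c.π i = i ∧ c.sign i = false} = N at *
  generalize #{i | c.π i = i} = f at *
  subst hsign
  obtain ⟨rfl, rfl⟩ : p = P + k ∧ q = N + k := by omega
  qify at hinv ⊢
  simp only [Nat.cast_choose_two, Nat.cast_add] at hinv
  nlinarith [mul_nonneg P.cast_nonneg (α := ℚ) N.cast_nonneg]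

end Clan

/-- Each covering relation `c' ⋖ c` of the weak order on `(p,q)`-clans decreases
`L(π) = (ℓ(π)+k)/2` by exactly 1 and hence increases the rank `L^±(π) = pq − L(π)` by
exactly 1. -/
theorem stmt19 (p q : ℕ) (a b : Fin (p + q)) (c' c : Clan p q)
    (h : ClanCov a b c' c) :
    (invNum c.π + numTwoCycles c.π) / 2 + 1 = (invNum c'.π + numTwoCycles c'.π) / 2 ∧
    p * q - (invNum c.π + numTwoCycles c.π) / 2 =
      (p * q - (invNum c'.π + numTwoCycles c'.π) / 2) + 1 := by
  have hbound := c'.invNum_add_numTwoCycles_le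
  obtain ⟨hb, ⟨hconj, hinv, -⟩ | ⟨hab, hπ, -, -⟩⟩ := h
  · have htwo : numTwoCycles c.π = numTwoCycles c'.π := by
      rw [hconj, ← numTwoCycles_conj (swap a b) c'.π, swap_inv]
    omega
  · have hcov : a ⋖ b := Fin.covBy_iff.2 (Nat.covBy_iff_add_one_eq.2 hb.symm)
    have hba : c'.π b = a := by rw [← hab, ← Perm.mul_apply, c'.invol, Perm.one_apply]
    have hinv := invNum_swap_mul_add_one hcov hcov.lt hab hba
    have htwo := numTwoCycles_swap_mul_add_one hcov.ne hab hba
    rw [← hπ] at hinv htwo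
    omega
end
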